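/- Let 𝔫 be the 5-dimensional real Lie algebra with orthonormal basis {E₁,…,E₅} and non-zero brackets [E₁,E₂] = m·E₄ and [E₁,E₃] = m·E₅ with m > 0. Then the diagonal endomorphism D defined by D(E₁) = m²·E₁, D(E₂) = (3/2)m²·E₂, D(E₃) = (3/2)m²·E₃, D(E₄) = (5/2)m²·E₄, D(E₅) = (5/2)m²·E₅ is a derivation of 𝔫, and Ric = −2m²·Id + D. -/

import Mathlib

/-!
Both operators are diagonal in the basis `E`: `D` by hypothesis, and `Ric` because evaluating its
defining formula on basis vectors gives `Ric = m² · diag(-1, -1/2, -1/2, 1/2, 1/2)`, which is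
`-2m² · Id + D`. A diagonal map is a derivation of this bracket as soon as its weights add up
along the two brackets, and indeed `1 + 3/2 = 5/2`.
-/

open scoped BigOperators

namespace Nilsoliton3

noncomputable section

abbrev V : Type := Fin 5 → ℝ

/-- The orthonormal basis vectors E₁,…,E₅ (indexed 0,…,4). -/
def E (i : Fin 5) : V := Pi.single i 1

/-- The inner product making `E` an orthonormal basis. -/
def ip (x y : V) : ℝ := ∑ i, x i * y i

/-- `D` is a derivation of the bracket `br`. -/
def IsDerivation (br : V → V → V) (D : V →ₗ[ℝ] V) : Prop :=
  ∀ X Y : V, D (br X Y) = br (D X) Y + br X (D Y)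

/-- `Ric` is the Ricci operator of the nilpotent Lie group with left-invariant
metric determined by the bracket `br` and the orthonormal basis `E`. -/
def IsRicci (br : V → V → V) (Ric : V →ₗ[ℝ] V) : Prop :=
  ∀ X Y : V, ip (Ric X) Y =
      -(1/2) * (∑ i : Fin 5, ip (br X (E i)) (br Y (E i)))
      + (1/4) * (∑ i : Fin 5, ∑ j : Fin 5, ip (br (E i) (E j)) X * ip (br (E i) (E j)) Y)

/-- The bracket: [E₁,E₂] = m·E₄, [E₁,E₃] = m·E₅. -/
def br (m : ℝ) (X Y : V) : V :=
  (m * (X 0 * Y 1 - X 1 * Y 0)) • E 3 + (m * (X 0 * Y 2 - X 2 * Y 0)) • E 4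


open Matrix

theorem eq_toLin'_diagonal_of_apply_single {R ι : Type*} [CommSemiring R] [Fintype ι]
    [DecidableEq ι] {f : (ι → R) →ₗ[R] (ι → R)} {d : ι → R}
    (hf : ∀ i, f (Pi.single i 1) = d i • Pi.single i 1) :
    f = toLin' (diagonal d) := by
  refine (Pi.basisFun R ι).ext fun i => ?_
  ext j
  rw [Pi.basisFun_apply, hf, toLin'_apply, mulVec_diagonal]
  by_cases h : j = i <;> simp [h]

theorem ip_E (x : V) (j : Fin 5) : ip x (E j) = x j := by
  simp [ip, E, Pi.single_apply]

theorem isDerivation_br_toLin'_diagonal (m : ℝ) {d : Fin 5 → ℝ}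
    (h3 : d 3 = d 0 + d 1) (h4 : d 4 = d 0 + d 2) :
    IsDerivation (br m) (toLin' (diagonal d)) := by
  intro X Y
  ext k
  simp only [br, E, toLin'_apply, mulVec_diagonal, Pi.add_apply, Pi.smul_apply,
    Pi.single_apply, smul_eq_mul]
  fin_cases k <;> simp only [Fin.isValue, Fin.reduceFinMk, Fin.reduceEq, ↓reduceIte, h3, h4] <;> ring

theorem sum_ip_br_E_br_E (m : ℝ) (X Y : V) :
    ∑ i, ip (br m X (E i)) (br m Y (E i)) = m ^ 2 * (2 * X 0 * Y 0 + X 1 * Y 1 + X 2 * Y 2) := by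
  simp only [ip, br, E, Fin.sum_univ_five, Pi.add_apply, Pi.smul_apply, smul_eq_mul,
    Pi.single_apply, Fin.isValue, Fin.reduceEq, ↓reduceIte]
  ring

theorem sum_ip_br_E_E_mul (m : ℝ) (X Y : V) :
    ∑ i, ∑ j, ip (br m (E i) (E j)) X * ip (br m (E i) (E j)) Y
      = 2 * m ^ 2 * (X 3 * Y 3 + X 4 * Y 4) := by
  simp only [ip, br, E, Fin.sum_univ_five, Pi.add_apply, Pi.smul_apply, smul_eq_mul,
    Pi.single_apply, Fin.isValue, Fin.reduceEq, ↓reduceIte]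
  ring

theorem IsRicci.eq_toLin'_diagonal {m : ℝ} {Ric : V →ₗ[ℝ] V} (hRic : IsRicci (br m) Ric) :
    Ric = toLin' (diagonal (m ^ 2 • ![-1, -1/2, -1/2, 1/2, 1/2])) := by
  refine LinearMap.ext fun X => funext fun j => ?_
  rw [← ip_E (Ric X) j, hRic, sum_ip_br_E_br_E, sum_ip_br_E_E_mul, toLin'_apply, mulVec_diagonal]
  fin_cases j <;> simp [E] <;> ring

theorem stmt3_general (m : ℝ)
    (Ric : V →ₗ[ℝ] V) (hRic : IsRicci (br m) Ric)
    (D : V →ₗ[ℝ] V)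
    (hD0 : D (E 0) = (m ^ 2) • E 0)
    (hD1 : D (E 1) = ((3/2) * m ^ 2) • E 1)
    (hD2 : D (E 2) = ((3/2) * m ^ 2) • E 2)
    (hD3 : D (E 3) = ((5/2) * m ^ 2) • E 3)
    (hD4 : D (E 4) = ((5/2) * m ^ 2) • E 4) :
    IsDerivation (br m) D ∧
    Ric = (-2 * m ^ 2) • (LinearMap.id : V →ₗ[ℝ] V) + D := by
  have hD : D = toLin' (diagonal ![m ^ 2, 3/2 * m ^ 2, 3/2 * m ^ 2, 5/2 * m ^ 2, 5/2 * m ^ 2]) := by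
    refine eq_toLin'_diagonal_of_apply_single fun i => ?_
    fin_cases i
    exacts [hD0, hD1, hD2, hD3, hD4]
  refine ⟨hD ▸ isDerivation_br_toLin'_diagonal m (by simp only [cons_val]; ring) (by simp only [cons_val]; ring), ?_⟩
  rw [hRic.eq_toLin'_diagonal, hD]
  refine LinearMap.ext fun X => funext fun j => ?_
  fin_cases j <;> simp [mulVec_diagonal] <;> ring

theorem stmt3 (m : ℝ) (hm : 0 < m)
    (Ric : V →ₗ[ℝ] V) (hRic : IsRicci (br m) Ric)
    (D : V →ₗ[ℝ] V)
    (hD0 : D (E 0) = (m ^ 2) • E 0)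
    (hD1 : D (E 1) = ((3/2) * m ^ 2) • E 1)
    (hD2 : D (E 2) = ((3/2) * m ^ 2) • E 2)
    (hD3 : D (E 3) = ((5/2) * m ^ 2) • E 3)
    (hD4 : D (E 4) = ((5/2) * m ^ 2) • E 4) :
    IsDerivation (br m) D ∧
    Ric = (-2 * m ^ 2) • (LinearMap.id : V →ₗ[ℝ] V) + D :=
  stmt3_general m Ric hRic D hD0 hD1 hD2 hD3 hD4

end

end Nilsoliton3
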